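/- arXiv:2210.16123 — 5 statements merged into one kernel-verified Lean document; each statement's English description precedes it below -/
import Mathlib

section
/- For every N ≥ 2 and k ≥ 1, the quantity σ_N(k) := T_N(k−1) + (2k−1) + T'_N(k) + (s_N(k−1) − 1) satisfies the closed form σ_N(k) = (2N/(N²−1))·(N^{2k} − 1) + 4k − 2. -/
def sN (N : ℕ) : ℕ → ℕ
  | 0 => N
  | n+1 => N^2 * sN N n - N^2 + N

def tN (N : ℕ) : ℕ → ℕ
  | 0 => 0
  | n+1 => (N + 1) * (sN N n - 1) + 1

def TN (N n : ℕ) : ℕ := ∑ i ∈ Finset.range (n + 1), tN N i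

def sN' (N : ℕ) : ℕ → ℕ
  | 0 => 1
  | n+1 => N^2 * sN' N n - N + 1

def tN' (N : ℕ) : ℕ → ℕ
  | 0 => 0
  | n+1 => (N + 1) * sN' N n + 1

def TN' (N n : ℕ) : ℕ := ∑ i ∈ Finset.range (n + 1), tN' N i

def sigmaN (N k : ℕ) : ℕ := TN N (k - 1) + (2 * k - 1) + TN' N k + (sN N (k - 1) - 1)

/-!
Both recursions are affine with multiplier `N²` and fixed points `N/(N+1)` and `1/(N+1)`,
which gives `(N+1)·s_N(n) = N^(2n+2) + N` and `(N+1)·s'_N(n) = N^(2n+1) + 1`. Hence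
`t_N(n+1) = N^(2n+2)` and `t'_N(n+1) = N^(2n+1) + 2`, so `T_N` and `T'_N` are geometric sums
(plus a linear term), and multiplying `σ_N(k)` by `N² - 1` telescopes everything.
-/

lemma le_sN (N : ℕ) : ∀ n, N ≤ sN N n
  | 0 => le_rfl
  | n + 1 => by simp only [sN]; omega

lemma one_le_sN' (N : ℕ) : ∀ n, 1 ≤ sN' N n
  | 0 => le_rfl
  | n + 1 => by simp only [sN']; omega

lemma succ_mul_sN {N : ℕ} (hN : 0 < N) (n : ℕ) : (N + 1) * sN N n = N ^ (2 * n + 2) + N := by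
  induction n with
  | zero => simp only [sN]; ring
  | succ n ih =>
    have hle : N ^ 2 ≤ N ^ 2 * sN N n := Nat.le_mul_of_pos_right _ (hN.trans_le (le_sN N n))
    simp only [sN]
    zify [hle] at ih ⊢
    linear_combination (N : ℤ) ^ 2 * ih

lemma succ_mul_sN' (N n : ℕ) : (N + 1) * sN' N n = N ^ (2 * n + 1) + 1 := by
  induction n with
  | zero => simp [sN']
  | succ n ih =>
    have hle : N ≤ N ^ 2 * sN' N n :=
      (Nat.le_self_pow two_ne_zero N).trans (Nat.le_mul_of_pos_right _ (one_le_sN' N n))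
    simp only [sN']
    zify [hle] at ih ⊢
    linear_combination (N : ℤ) ^ 2 * ih

lemma tN_succ {N : ℕ} (hN : 0 < N) (n : ℕ) : tN N (n + 1) = N ^ (2 * n + 2) := by
  have hs := succ_mul_sN hN n
  have h1 : 1 ≤ sN N n := hN.trans_le (le_sN N n)
  simp only [tN]
  zify [h1] at hs ⊢
  linear_combination hs

lemma tN'_succ (N n : ℕ) : tN' N (n + 1) = N ^ (2 * n + 1) + 2 := by
  simp only [tN', succ_mul_sN']

lemma sq_sub_one_mul_TN {N : ℕ} (hN : 0 < N) (n : ℕ) :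
    ((N : ℤ) ^ 2 - 1) * TN N n = N ^ (2 * n + 2) - N ^ 2 := by
  induction n with
  | zero => simp [TN, tN]
  | succ n ih =>
    rw [TN, Finset.sum_range_succ, ← TN, tN_succ hN]
    push_cast
    linear_combination ih

lemma sq_sub_one_mul_TN' (N n : ℕ) :
    ((N : ℤ) ^ 2 - 1) * TN' N n = N ^ (2 * n + 1) - N + 2 * n * (N ^ 2 - 1) := by
  induction n with
  | zero => simp [TN', tN']
  | succ n ih =>
    rw [TN', Finset.sum_range_succ, ← TN', tN'_succ]
    push_cast
    linear_combination ih

lemma sq_sub_one_mul_sigmaN {N : ℕ} (hN : 0 < N) {k : ℕ} (hk : 1 ≤ k) :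
    ((N : ℤ) ^ 2 - 1) * sigmaN N k = 2 * N * (N ^ (2 * k) - 1) + (4 * k - 2) * (N ^ 2 - 1) := by
  obtain ⟨m, rfl⟩ : ∃ m, k = m + 1 := ⟨k - 1, by omega⟩
  have hT := sq_sub_one_mul_TN hN m
  have hT' := sq_sub_one_mul_TN' N (m + 1)
  have hs : ((N : ℤ) + 1) * sN N m = N ^ (2 * m + 2) + N := by exact_mod_cast succ_mul_sN hN m
  have h1 : 1 ≤ sN N m := hN.trans_le (le_sN N m)
  simp only [sigmaN, Nat.add_sub_cancel]
  push_cast [h1, show 1 ≤ 2 * (m + 1) by omega] at hT' ⊢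
  linear_combination hT + hT' + ((N : ℤ) - 1) * hs

theorem stmt_7 (N : ℕ) (hN : 2 ≤ N) (k : ℕ) (hk : 1 ≤ k) :
    (N ^ 2 - 1) * sigmaN N k = 2 * N * (N ^ (2 * k) - 1) + (4 * k - 2) * (N ^ 2 - 1) := by
  have hN0 : 0 < N := by omega
  have hN2 : 1 ≤ N ^ 2 := Nat.one_le_pow _ _ hN0
  have hNk : 1 ≤ N ^ (2 * k) := Nat.one_le_pow _ _ hN0
  zify [hN2, hNk, show 2 ≤ 4 * k by omega]
  exact sq_sub_one_mul_sigmaN hN0 hk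
end

section
/- In the monoid Π_N = ⟨a, b | baa(ba)^N = a⟩ with N ≥ 2, writing X = ba, for all p, q ≥ 0 the equality X^p · a · a · X^q = a · a · X^{q + pN²} holds. -/
inductive AB : Type
  | a : AB
  | b : AB

/-- The generator `a` as a word in the free monoid on `{a, b}`. -/
def wa : FreeMonoid AB := FreeMonoid.of AB.a

/-- The generator `b` as a word in the free monoid on `{a, b}`. -/
def wb : FreeMonoid AB := FreeMonoid.of AB.b

/-- The single defining relation `baa(ba)^N = a` of `Π_N`. -/
def piRel (N : ℕ) : FreeMonoid AB → FreeMonoid AB → Prop :=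
  fun x y => x = wb * wa * wa * (wb * wa) ^ N ∧ y = wa

/-- Equality in `Π_N`, i.e. the congruence on the free monoid generated by the relation. -/
def piEq (N : ℕ) : FreeMonoid AB → FreeMonoid AB → Prop :=
  fun u v => conGen (piRel N) u v


/-!
In any monoid where `x * a * x ^ N = a`, conjugating `a` by `x` repeatedly gives
`x ^ k * a * x ^ (k * N) = a`. Rewriting the first `a` of `a * a * x ^ (N ^ 2)` by the relation
and then using the case `k = N` yields `a * a * x ^ (N ^ 2) = x * a * a`, i.e. `a * a`
semiconjugates `x ^ (N ^ 2)` to `x`.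
Powering this semiconjugacy gives the claim in the quotient monoid `Π_N`, where `x = ba`.
-/

section Monoid

variable {M : Type*} [Monoid M] {x a : M} {N : ℕ}

theorem pow_mul_mul_pow_mul_eq_of_mul_mul_pow_eq (h : x * a * x ^ N = a) (k : ℕ) :
    x ^ k * a * x ^ (k * N) = a := by
  induction k with
  | zero => simp
  | succ k ih =>
    calc x ^ (k + 1) * a * x ^ ((k + 1) * N)
        = x ^ k * (x * a * x ^ N) * x ^ (k * N) := by
          rw [pow_succ, add_mul, one_mul, add_comm (k * N), pow_add]; simp only [mul_assoc]
      _ = a := by rw [h, ih]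

theorem mul_mul_pow_sq_eq_of_mul_mul_pow_eq (h : x * a * x ^ N = a) :
    a * a * x ^ (N ^ 2) = x * a * a :=
  calc a * a * x ^ (N ^ 2)
      = x * a * (x ^ N * a * x ^ (N * N)) := by
        nth_rw 1 [← h]
        rw [sq]; simp only [mul_assoc]
    _ = x * a * a := by rw [pow_mul_mul_pow_mul_eq_of_mul_mul_pow_eq h]

theorem pow_mul_mul_mul_pow_eq_of_mul_mul_pow_eq (h : x * a * x ^ N = a) (p q : ℕ) :
    x ^ p * a * a * x ^ q = a * a * x ^ (q + p * N ^ 2) := by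
  have hsemiconj : SemiconjBy (a * a) (x ^ (N ^ 2)) x := by
    rw [SemiconjBy, mul_mul_pow_sq_eq_of_mul_mul_pow_eq h, mul_assoc]
  rw [add_comm, pow_add, mul_comm p, pow_mul, ← mul_assoc, (hsemiconj.pow_right p).eq,
    mul_assoc (x ^ p)]

end Monoid

theorem piEq_iff_mk'_eq (N : ℕ) (u v : FreeMonoid AB) :
    piEq N u v ↔ (conGen (piRel N)).mk' u = (conGen (piRel N)).mk' v :=
  (Con.eq _).symm

theorem mk'_piRel (N : ℕ) :
    let π := (conGen (piRel N)).mk'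
    π (wb * wa) * π wa * π (wb * wa) ^ N = π wa := by
  intro π
  simp only [π, ← map_mul, ← map_pow]
  exact (Con.eq _).mpr (ConGen.Rel.of _ _ ⟨rfl, rfl⟩)

theorem stmt_11_general (N : ℕ) (p q : ℕ) :
    piEq N ((wb * wa) ^ p * wa * wa * (wb * wa) ^ q)
      (wa * wa * (wb * wa) ^ (q + p * N ^ 2)) := by
  rw [piEq_iff_mk'_eq]
  simp only [map_mul, map_pow]
  exact pow_mul_mul_mul_pow_eq_of_mul_mul_pow_eq (mk'_piRel N) p q

theorem stmt_11 (N : ℕ) (hN : 2 ≤ N) (p q : ℕ) :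
    piEq N ((wb * wa) ^ p * wa * wa * (wb * wa) ^ q)
      (wa * wa * (wb * wa) ^ (q + p * N ^ 2)) :=
  stmt_11_general N p q
end

section
/- In the monoid Π_N = ⟨a, b | baa(ba)^N = a⟩ with N ≥ 2, writing X = ba, for every p ≥ 1 and q > 1 the equality b^{2q−1} · X^p · a^{2q} = b^{2(q−1)−1} · X^{pN² − N + 1} · a^{2(q−1)} holds. -/
abbrev XX : FreeMonoid AB := wb * wa

lemma rel1 (N : ℕ) : conGen (piRel N) (XX * wa * XX ^ N) wa := by
  have h : (XX * wa * XX ^ N) = wb * wa * wa * (wb * wa) ^ N := by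
    simp [XX, mul_assoc]
  rw [h]
  exact ConGen.Rel.of _ _ ⟨rfl, rfl⟩

lemma expand (N m : ℕ) : conGen (piRel N) wa (XX ^ m * wa * XX ^ (m * N)) := by
  induction m with
  | zero => simpa using (conGen (piRel N)).refl wa
  | succ k ih =>
    have h1 := (conGen (piRel N)).symm (rel1 N)
    refine (conGen (piRel N)).trans h1 ?_
    have h2 : conGen (piRel N) (XX * wa * XX ^ N) (XX * (XX ^ k * wa * XX ^ (k * N)) * XX ^ N) :=
      (conGen (piRel N)).mul
        ((conGen (piRel N)).mul ((conGen (piRel N)).refl XX) ih)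
        ((conGen (piRel N)).refl _)
    refine (conGen (piRel N)).trans h2 ?_
    have h3 : XX * (XX ^ k * wa * XX ^ (k * N)) * XX ^ N
        = XX ^ (k + 1) * wa * XX ^ ((k + 1) * N) := by
      rw [pow_succ', add_mul, one_mul, pow_add]
      simp [mul_assoc]
    rw [h3]
    exact (conGen (piRel N)).refl _

theorem stmt_12 (N : ℕ) (hN : 2 ≤ N) (p q : ℕ) (hp : 1 ≤ p) (hq : 1 < q) :
    piEq N (wb ^ (2 * q - 1) * (wb * wa) ^ p * wa ^ (2 * q))
      (wb ^ (2 * (q - 1) - 1) * (wb * wa) ^ (p * N ^ 2 - N + 1) * wa ^ (2 * (q - 1))) := by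
  obtain ⟨j, rfl⟩ : ∃ j, q = j + 2 := ⟨q - 2, by omega⟩
  set c := conGen (piRel N) with hc
  have hrefl : ∀ {u v : FreeMonoid AB}, u = v → c u v := fun h => h ▸ c.refl _
  have hN2 : N ≤ p * N * N := by
    calc N = 1 * (N * 1) := by ring
      _ ≤ p * (N * N) := Nat.mul_le_mul hp (Nat.mul_le_mul_left N (by omega))
      _ = p * N * N := by ring
  set M := p * N ^ 2 - N with hMdef
  have hMN : p * N * N = N + M := by
    have : p * N ^ 2 = p * N * N := by ring
    omega
  have hM1 : p * N ^ 2 - N + 1 = M + 1 := rfl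
  show c (wb ^ (2 * (j + 2) - 1) * XX ^ p * wa ^ (2 * (j + 2)))
      (wb ^ (2 * (j + 2 - 1) - 1) * XX ^ (p * N ^ 2 - N + 1) * wa ^ (2 * (j + 2 - 1)))
  have e1 : 2 * (j + 2) - 1 = 2 * j + 3 := by omega
  have e2 : 2 * (j + 2) = 2 * j + 4 := by omega
  have e3 : 2 * (j + 2 - 1) - 1 = 2 * j + 1 := by omega
  have e4 : 2 * (j + 2 - 1) = 2 * j + 2 := by omega
  rw [e1, e2, e3, e4, hM1]
  have eq1 : wb ^ (2 * j + 3) * XX ^ p * wa ^ (2 * j + 4)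
      = (wb ^ (2 * j + 3) * (XX ^ p * wa)) * (wa * wa ^ (2 * j + 2)) := by
    rw [show 2 * j + 4 = 1 + (1 + (2 * j + 2)) from by omega, pow_add wa 1 (1 + (2 * j + 2)),
      pow_add wa 1 (2 * j + 2), pow_one]
    simp [mul_assoc]
  have st2 : c ((wb ^ (2 * j + 3) * (XX ^ p * wa)) * (wa * wa ^ (2 * j + 2)))
      ((wb ^ (2 * j + 3) * (XX ^ p * wa)) *
        ((XX ^ (p * N) * wa * XX ^ (p * N * N)) * wa ^ (2 * j + 2))) :=
    c.mul (c.refl _) (c.mul (expand N (p * N)) (c.refl _))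
  have eq3 : (wb ^ (2 * j + 3) * (XX ^ p * wa)) *
        ((XX ^ (p * N) * wa * XX ^ (p * N * N)) * wa ^ (2 * j + 2))
      = wb ^ (2 * j + 3) *
        ((XX ^ p * wa * XX ^ (p * N)) * (wa * (XX ^ (p * N * N) * wa ^ (2 * j + 2)))) := by
    simp [mul_assoc]
  have st4 : c (wb ^ (2 * j + 3) *
        ((XX ^ p * wa * XX ^ (p * N)) * (wa * (XX ^ (p * N * N) * wa ^ (2 * j + 2)))))
      (wb ^ (2 * j + 3) * (wa * (wa * (XX ^ (p * N * N) * wa ^ (2 * j + 2))))) :=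
    c.mul (c.refl _) (c.mul (c.symm (expand N p)) (c.refl _))
  have eq5 : wb ^ (2 * j + 3) * (wa * (wa * (XX ^ (p * N * N) * wa ^ (2 * j + 2))))
      = (wb ^ (2 * j + 2) * (XX * wa * XX ^ N)) * (XX ^ M * wa ^ (2 * j + 2)) := by
    rw [hMN, pow_add XX N M, show 2 * j + 3 = 2 * j + 2 + 1 from by omega,
      pow_add wb (2 * j + 2) 1, pow_one]
    simp [XX, mul_assoc]
  have st6 : c ((wb ^ (2 * j + 2) * (XX * wa * XX ^ N)) * (XX ^ M * wa ^ (2 * j + 2)))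
      ((wb ^ (2 * j + 2) * wa) * (XX ^ M * wa ^ (2 * j + 2))) :=
    c.mul (c.mul (c.refl _) (rel1 N)) (c.refl _)
  have eq7 : (wb ^ (2 * j + 2) * wa) * (XX ^ M * wa ^ (2 * j + 2))
      = wb ^ (2 * j + 1) * XX ^ (M + 1) * wa ^ (2 * j + 2) := by
    rw [show 2 * j + 2 = 2 * j + 1 + 1 from by omega, pow_add wb (2 * j + 1) 1, pow_one,
      pow_succ' XX M]
    simp [XX, mul_assoc]
  exact c.trans (hrefl eq1) (c.trans st2 (c.trans (hrefl eq3)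
    (c.trans st4 (c.trans (hrefl eq5) (c.trans st6 (hrefl eq7))))))
end

section
/- In the monoid Π_N = ⟨a, b | baa(ba)^N = a⟩ with N ≥ 2, for every k ≥ 1 the words U_k = a·b^{2k}·a^{2k}·a and V_k = b^{2k−1}·a^{2k}·b·a·a represent the same element of Π_N. -/
def E (N : ℕ) : Con (FreeMonoid AB) := conGen (piRel N)

lemma key (N : ℕ) : E N (wb*wa*wa*(wb*wa)^N) wa := ConGen.Rel.of _ _ ⟨rfl, rfl⟩

lemma mulL {N x y} (L : FreeMonoid AB) (h : E N x y) : E N (L*x) (L*y) :=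
  (E N).mul ((E N).refl L) h

lemma mulR {N x y} (R : FreeMonoid AB) (h : E N x y) : E N (x*R) (y*R) :=
  (E N).mul h ((E N).refl R)

lemma pump (N m : ℕ) : E N wa ((wb*wa)^m * wa * (wb*wa)^(m*N)) := by
  induction m with
  | zero => simpa using (E N).refl wa
  | succ m ih =>
    have h2 : E N ((wb*wa)^m * wa * (wb*wa)^(m*N))
        ((wb*wa)^m * (wb*wa*wa*(wb*wa)^N) * (wb*wa)^(m*N)) :=
      mulR _ (mulL _ ((E N).symm (key N)))
    have egoal : (wb*wa)^(m+1) * wa * (wb*wa)^((m+1)*N)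
        = (wb*wa)^m * (wb*wa*wa*(wb*wa)^N) * (wb*wa)^(m*N) := by
      rw [show (m+1)*N = N + m*N by ring, pow_add, pow_succ]
      simp [pow_add, pow_succ, mul_assoc]
    rw [egoal]
    exact (E N).trans ih h2

lemma swap3 (N : ℕ) : E N (wb*wa*wa*wa) (wa*wa*(wb*wa)^(N*N)) := by
  have h1 : E N (wb*wa*wa*wa) (wb*wa*wa*((wb*wa)^N * wa * (wb*wa)^(N*N))) :=
    mulL (wb*wa*wa) (pump N N)
  have h2 : E N ((wb*wa*wa*(wb*wa)^N) * (wa*(wb*wa)^(N*N))) (wa*(wa*(wb*wa)^(N*N))) :=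
    mulR _ (key N)
  refine (E N).trans h1 ?_
  have e1 : wb*wa*wa*((wb*wa)^N * wa * (wb*wa)^(N*N))
      = (wb*wa*wa*(wb*wa)^N) * (wa*(wb*wa)^(N*N)) := by simp [mul_assoc]
  have e2 : wa*wa*(wb*wa)^(N*N) = wa*(wa*(wb*wa)^(N*N)) := by simp [mul_assoc]
  rw [e1, e2]; exact h2

lemma shift (N i : ℕ) : ∀ m, E N ((wb*wa)^i * (wa*wa) * (wb*wa)^m)
    (wa*wa*(wb*wa)^(m+i*(N*N))) := by
  induction i with
  | zero => intro m; simpa [mul_assoc] using (E N).refl (wa*(wa*(wb*wa)^m))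
  | succ i ih =>
    intro m
    have h1 : E N ((wb*wa)^i * (wb*wa*wa*wa) * (wb*wa)^m)
        ((wb*wa)^i * (wa*wa*(wb*wa)^(N*N)) * (wb*wa)^m) :=
      mulR _ (mulL _ (swap3 N))
    have h2 := ih (N*N+m)
    have e1 : (wb*wa)^(i+1) * (wa*wa) * (wb*wa)^m
        = (wb*wa)^i * (wb*wa*wa*wa) * (wb*wa)^m := by
      rw [pow_succ]; simp [pow_add, pow_succ, mul_assoc]
    have e2 : (wb*wa)^i * (wa*wa*(wb*wa)^(N*N)) * (wb*wa)^m
        = (wb*wa)^i * (wa*wa) * (wb*wa)^(N*N+m) := by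
      rw [pow_add]; simp [pow_add, pow_succ, mul_assoc]
    have e3 : m+(i+1)*(N*N) = N*N+m+i*(N*N) := by ring
    rw [e1, e3]
    exact (E N).trans h1 (e2 ▸ h2)

/-- core : b b a t^j a a ≈ a t^(dN + jN²)  (where N = d+1) -/
lemma core (N d : ℕ) (hd : N = d+1) (j : ℕ) :
    E N (wb*wb*wa*((wb*wa)^j*(wa*wa))) (wa*(wb*wa)^(d*N+j*(N*N))) := by
  have h1 : E N (wb*wb*wa*((wb*wa)^j*(wa*wa)))
      (wb*(wb*(wa*(wa*(wa*(wb*wa)^(j*(N*N))))))) := by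
    simpa [mul_assoc] using mulL (N:=N) (wb*wb*wa) (shift N j 0)
  have h2 : E N (wb*(wb*(wa*(wa*(wa*(wb*wa)^(j*(N*N)))))))
      (wb*(wb*(wa*(wa*((wb*wa)^N*(wa*((wb*wa)^(N*N)*(wb*wa)^(j*(N*N))))))))) := by
    simpa [mul_assoc] using
      mulL (N:=N) (wb*(wb*(wa*wa))) (mulR ((wb*wa)^(j*(N*N))) (pump N N))
  have h3 : E N (wb*(wb*(wa*(wa*((wb*wa)^N*(wa*((wb*wa)^(N*N)*(wb*wa)^(j*(N*N)))))))))
      (wb*(wa*(wa*((wb*wa)^(N*N)*(wb*wa)^(j*(N*N)))))) := by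
    simpa [mul_assoc] using
      mulL (N:=N) wb (mulR (wa*((wb*wa)^(N*N)*(wb*wa)^(j*(N*N)))) (key N))
  have h4 : E N (wb*(wa*(wa*((wb*wa)^(N*N)*(wb*wa)^(j*(N*N))))))
      (wa*(wb*wa)^(d*N+j*(N*N))) := by
    have ew : wb*(wa*(wa*((wb*wa)^(N*N)*(wb*wa)^(j*(N*N)))))
        = (wb*wa*wa*(wb*wa)^N) * (wb*wa)^(d*N+j*(N*N)) := by
      conv_lhs => rw [← pow_add]
      rw [show N*N+j*(N*N) = N+(d*N+j*(N*N)) by subst hd; ring, pow_add]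
      simp [mul_assoc]
    rw [ew]
    exact mulR _ (key N)
  exact (E N).trans h1 ((E N).trans h2 ((E N).trans h3 h4))

/-- base : a·(b b a t^j a a) ≈ b a t^j a b a a -/
lemma base (N d : ℕ) (hd : N = d+1) (j : ℕ) :
    E N (wa*(wb*wb*wa*((wb*wa)^j*(wa*wa))))
      (wb*(wa*((wb*wa)^j*(wa*(wb*(wa*wa)))))) := by
  subst hd
  set N := d+1 with hN
  have hA : E N (wa*(wb*wb*wa*((wb*wa)^j*(wa*wa))))
      (wa*(wa*(wb*wa)^(d*N+j*(N*N)))) := by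
    simpa [mul_assoc] using mulL (N:=N) wa (core N d rfl j)
  have b1 : E N (wb*(wa*((wb*wa)^j*(wa*(wb*(wa*wa))))))
      (wb*(wa*((wb*wa)^j*(wa*(wb*(wa*((wb*wa)^d*(wa*(wb*wa)^(d*N))))))))) := by
    simpa [mul_assoc] using
      mulL (N:=N) wb (mulL wa (mulL ((wb*wa)^j) (mulL wa (mulL wb (mulL wa (pump N d))))))
  have ew : wb*(wa*((wb*wa)^j*(wa*(wb*(wa*((wb*wa)^d*(wa*(wb*wa)^(d*N))))))))
      = (wb*wa)^j*((wb*wa*wa*(wb*wa)^N)*(wa*(wb*wa)^(d*N))) := by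
    rw [← mul_assoc, ← mul_assoc, ← pow_succ', pow_succ]
    simp only [hN]
    rw [pow_succ']
    simp [mul_assoc]
  have b2 : E N ((wb*wa)^j*((wb*wa*wa*(wb*wa)^N)*(wa*(wb*wa)^(d*N))))
      ((wb*wa)^j*(wa*(wa*(wb*wa)^(d*N)))) :=
    mulL _ (mulR _ (key N))
  have b3 : E N ((wb*wa)^j*(wa*(wa*(wb*wa)^(d*N))))
      (wa*(wa*(wb*wa)^(d*N+j*(N*N)))) := by
    simpa [mul_assoc] using shift N j (d*N)
  exact (E N).trans hA ((E N).symm ((E N).trans b1 (ew ▸ (E N).trans b2 b3)))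

lemma main (N d : ℕ) (hd : N = d+1) :
    ∀ k j, E N (wa*(wb^(2*k+2)*(wa*((wb*wa)^j*wa^(2*k+2)))))
      (wb^(2*k+1)*(wa*((wb*wa)^j*(wa^(2*k+1)*(wb*(wa*wa)))))) := by
  intro k
  induction k with
  | zero =>
    intro j
    simpa [pow_two, mul_assoc] using base N d hd j
  | succ k ih =>
    intro j
    have c1 : E N (wa*(wb^(2*k+2)*((wb*wb*wa*((wb*wa)^j*(wa*wa)))*wa^(2*k+2))))
        (wa*(wb^(2*k+2)*((wa*(wb*wa)^(d*N+j*(N*N)))*wa^(2*k+2)))) :=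
      mulL _ (mulL _ (mulR _ (core N d hd j)))
    have c2 : E N (wb^(2*k+1)*((wb*wb*wa*((wb*wa)^j*(wa*wa)))*(wa^(2*k+1)*(wb*(wa*wa)))))
        (wb^(2*k+1)*((wa*(wb*wa)^(d*N+j*(N*N)))*(wa^(2*k+1)*(wb*(wa*wa))))) :=
      mulL _ (mulR _ (core N d hd j))
    have m1' : E N (wa*(wb^(2*k+2)*((wa*(wb*wa)^(d*N+j*(N*N)))*wa^(2*k+2))))
        (wb^(2*k+1)*((wa*(wb*wa)^(d*N+j*(N*N)))*(wa^(2*k+1)*(wb*(wa*wa))))) := by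
      simpa [mul_assoc] using ih (d*N+j*(N*N))
    have ea : wa^(2*(k+1)+2) = wa*(wa*wa^(2*k+2)) := by
      rw [show 2*(k+1)+2 = 1+(1+(2*k+2)) by ring, pow_add, pow_add, pow_one]
    have eb : wb^(2*(k+1)+2) = wb^(2*k+2)*(wb*wb) := by
      rw [show 2*(k+1)+2 = (2*k+2)+2 by ring, pow_add, pow_two]
    have ea' : wa^(2*(k+1)+1) = wa*(wa*wa^(2*k+1)) := by
      rw [show 2*(k+1)+1 = 1+(1+(2*k+1)) by ring, pow_add, pow_add, pow_one]
    have eb' : wb^(2*(k+1)+1) = wb^(2*k+1)*(wb*wb) := by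
      rw [show 2*(k+1)+1 = (2*k+1)+2 by ring, pow_add, pow_two]
    have eL : wa*(wb^(2*(k+1)+2)*(wa*((wb*wa)^j*wa^(2*(k+1)+2))))
        = wa*(wb^(2*k+2)*((wb*wb*wa*((wb*wa)^j*(wa*wa)))*wa^(2*k+2))) := by
      rw [ea, eb]; simp [mul_assoc]
    have eR : wb^(2*(k+1)+1)*(wa*((wb*wa)^j*(wa^(2*(k+1)+1)*(wb*(wa*wa)))))
        = wb^(2*k+1)*((wb*wb*wa*((wb*wa)^j*(wa*wa)))*(wa^(2*k+1)*(wb*(wa*wa)))) := by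
      rw [ea', eb']; simp [mul_assoc]
    rw [eL, eR]
    exact (E N).trans c1 ((E N).trans m1' ((E N).symm c2))


theorem stmt_14 (N : ℕ) (hN : 2 ≤ N) (k : ℕ) (hk : 1 ≤ k) :
    piEq N (wa * wb ^ (2 * k) * wa ^ (2 * k) * wa)
      (wb ^ (2 * k - 1) * wa ^ (2 * k) * wb * wa * wa) := by
  obtain ⟨d, hd⟩ : ∃ d, N = d+1 := ⟨N-1, by omega⟩
  obtain ⟨K, rfl⟩ : ∃ K, k = K+1 := ⟨k-1, by omega⟩
  have h := main N d hd K 0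
  have goal' : E N (wa * wb ^ (2*(K+1)) * wa ^ (2*(K+1)) * wa)
      (wb ^ (2*(K+1)-1) * wa ^ (2*(K+1)) * wb * wa * wa) := by
    rw [show 2*(K+1) = 2*K+2 by ring, show 2*K+2-1 = 2*K+1 by omega]
    have e1 : wa^(2*K+2)*wa = wa*wa^(2*K+2) := by rw [← pow_succ, ← pow_succ']
    have e2 : wa^(2*K+2) = wa*wa^(2*K+1) := by
      rw [show 2*K+2 = 1+(2*K+1) by ring, pow_add, pow_one]
    simp only [mul_assoc]
    rw [e1]
    conv_rhs => rw [e2]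
    simpa [mul_assoc] using h
  exact goal'
end

section
/- The group defined by the presentation ⟨a, b | baa(ba)^N = a⟩ is isomorphic to the Baumslag–Solitar group BS(1, −N) = ⟨a, b | a⁻¹ b a = b^{−N}⟩, for every N ≥ 2. -/
/-- The relator `baa(ba)^N a⁻¹`, corresponding to the relation `baa(ba)^N = a`. -/
def rels1 (N : ℕ) : Set (FreeGroup AB) :=
  {FreeGroup.of AB.b * FreeGroup.of AB.a * FreeGroup.of AB.a *
      (FreeGroup.of AB.b * FreeGroup.of AB.a) ^ N * (FreeGroup.of AB.a)⁻¹}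

/-- The relator `a⁻¹ b a b^N`, corresponding to the relation `a⁻¹ b a = b^{-N}` of `BS(1, -N)`. -/
def rels2 (N : ℕ) : Set (FreeGroup AB) :=
  {(FreeGroup.of AB.a)⁻¹ * FreeGroup.of AB.b * FreeGroup.of AB.a * (FreeGroup.of AB.b) ^ N}

lemma pg_rel_one {rels : Set (FreeGroup AB)} {r : FreeGroup AB} (hr : r ∈ rels) :
    PresentedGroup.mk rels r = 1 := by
  have : r ∈ Subgroup.normalClosure rels := Subgroup.subset_normalClosure hr
  exact (QuotientGroup.eq_one_iff r).mpr this

noncomputable section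

def f1 (N : ℕ) : AB → PresentedGroup (rels2 N)
  | .a => .of .a
  | .b => .of .b * (.of .a)⁻¹

def f2 (N : ℕ) : AB → PresentedGroup (rels1 N)
  | .a => .of .a
  | .b => .of .b * .of .a

lemma h1 (N : ℕ) : ∀ r ∈ rels1 N, FreeGroup.lift (f1 N) r = 1 := by
  intro r hr
  rcases hr with rfl
  have hrel : ((PresentedGroup.of AB.a : PresentedGroup (rels2 N)))⁻¹ *
      .of AB.b * .of AB.a * (.of AB.b) ^ N = 1 := by
    have := pg_rel_one (rels := rels2 N) (r := (FreeGroup.of AB.a)⁻¹ * FreeGroup.of AB.b *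
      FreeGroup.of AB.a * (FreeGroup.of AB.b) ^ N) rfl
    simpa [PresentedGroup.of] using this
  set A := (PresentedGroup.of AB.a : PresentedGroup (rels2 N))
  set B := (PresentedGroup.of AB.b : PresentedGroup (rels2 N))
  have : FreeGroup.lift (f1 N) (FreeGroup.of AB.b * FreeGroup.of AB.a * FreeGroup.of AB.a *
      (FreeGroup.of AB.b * FreeGroup.of AB.a) ^ N * (FreeGroup.of AB.a)⁻¹)
      = (B * A⁻¹) * A * A * ((B * A⁻¹) * A) ^ N * A⁻¹ := by
    simp [f1, A, B]
  rw [this]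
  calc (B * A⁻¹) * A * A * ((B * A⁻¹) * A) ^ N * A⁻¹
      = A * (A⁻¹ * B * A * B ^ N) * A⁻¹ := by group
    _ = 1 := by rw [hrel]; group

lemma h2 (N : ℕ) : ∀ r ∈ rels2 N, FreeGroup.lift (f2 N) r = 1 := by
  intro r hr
  rcases hr with rfl
  have hrel : (PresentedGroup.of AB.b : PresentedGroup (rels1 N)) * .of AB.a * .of AB.a *
      (.of AB.b * .of AB.a) ^ N * (.of AB.a)⁻¹ = 1 := by
    have := pg_rel_one (rels := rels1 N) (r := FreeGroup.of AB.b * FreeGroup.of AB.a *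
      FreeGroup.of AB.a * (FreeGroup.of AB.b * FreeGroup.of AB.a) ^ N * (FreeGroup.of AB.a)⁻¹) rfl
    simpa [PresentedGroup.of] using this
  set A := (PresentedGroup.of AB.a : PresentedGroup (rels1 N))
  set B := (PresentedGroup.of AB.b : PresentedGroup (rels1 N))
  have : FreeGroup.lift (f2 N) ((FreeGroup.of AB.a)⁻¹ * FreeGroup.of AB.b *
      FreeGroup.of AB.a * (FreeGroup.of AB.b) ^ N)
      = A⁻¹ * (B * A) * A * (B * A) ^ N := by
    simp [f2, A, B]
  rw [this]
  calc A⁻¹ * (B * A) * A * (B * A) ^ N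
      = A⁻¹ * (B * A * A * (B * A) ^ N * A⁻¹) * A := by group
    _ = 1 := by rw [hrel]; group

theorem stmt_15 (N : ℕ) (hN : 2 ≤ N) :
    Nonempty (PresentedGroup (rels1 N) ≃* PresentedGroup (rels2 N)) := by
  let φ : PresentedGroup (rels1 N) →* PresentedGroup (rels2 N) := PresentedGroup.toGroup (h1 N)
  let ψ : PresentedGroup (rels2 N) →* PresentedGroup (rels1 N) := PresentedGroup.toGroup (h2 N)
  have hψφ : ψ.comp φ = MonoidHom.id _ := by
    ext x
    cases x <;> simp [φ, ψ, f1, f2]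
  have hφψ : φ.comp ψ = MonoidHom.id _ := by
    ext x
    cases x <;> simp [φ, ψ, f1, f2]
  exact ⟨MonoidHom.toMulEquiv φ ψ hψφ hφψ⟩

end
end
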